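/- arXiv:1308.5336 — 3 statements merged into one kernel-verified Lean document; each statement's English description precedes it below -/
import Mathlib

section
/- Assuming A₁ = A₂ = A, every hybrid trace generated by the composition H₁ ∥ H₂, when restricted to the variables and actions of H₁, is generated by H₁. -/
/-- A trajectory over the variables `X ⊆ V`: a function on a time domain giving a
valuation over `X` at each time. -/
structure Traj (V : Type*) (X : Set V) where
  dom : Set ℝ
  f : ℝ → X → ℝ

/-- The first state of a trajectory. -/
def Traj.fstate {V : Type*} {X : Set V} (τ : Traj V X) : X → ℝ := τ.f 0

/-- The last state of a trajectory. -/
noncomputable def Traj.lstate {V : Type*} {X : Set V} (τ : Traj V X) : X → ℝ :=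
  τ.f (sSup τ.dom)

/-- Pointwise restriction of a trajectory to `Y ⊆ X`. -/
def Traj.restrict {V : Type*} {X Y : Set V} (h : Y ⊆ X) (τ : Traj V X) : Traj V Y :=
  ⟨τ.dom, fun t => (τ.f t) ∘ Set.inclusion h⟩

/-- A flow constraint: a predicate on trajectories over its set of variables. -/
structure FlowC (V : Type*) where
  vars : Set V
  sat : Traj V vars → Prop

/-- A trajectory over `X` respects a flow constraint whose variables are
contained in `X` if the restricted trajectory satisfies it. -/
def FlowSat {V : Type*} {X : Set V} (τ : Traj V X) (c : FlowC V) : Prop :=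
  ∃ h : c.vars ⊆ X, c.sat (τ.restrict h)

/-- A jump constraint: a predicate on pairs of valuations over its variables. -/
structure JumpC (V : Type*) where
  vars : Set V
  sat : (vars → ℝ) → (vars → ℝ) → Prop

/-- A pair of valuations over `X` respects a jump constraint whose variables are
contained in `X` if the restricted valuations satisfy it. -/
def JumpSat {V : Type*} {X : Set V} (x x' : X → ℝ) (c : JumpC V) : Prop :=
  ∃ h : c.vars ⊆ X, c.sat (x ∘ Set.inclusion h) (x' ∘ Set.inclusion h)

/-- The stuttering jump constraint `x' = x`. -/
def eqJ {V : Type*} (v : V) : JumpC V :=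
  ⟨{v}, fun x x' => x = x'⟩

/-- A hybrid automaton. -/
structure HA (V Act : Type*) where
  Loc : Type*
  X : Set V
  A : Set Act
  Edg : Set (Loc × Act × Loc)
  Dyn : Loc → Set (FlowC V)
  Res : Loc × Act × Loc → Set (JumpC V)
  Init : Set Loc

/-- Parallel composition of hybrid automata. -/
def comp {V Act : Type*} (H1 H2 : HA V Act) : HA V Act where
  Loc := H1.Loc × H2.Loc
  X := H1.X ∪ H2.X
  A := H1.A ∪ H2.A
  Edg := { e | ((e.2.1 ∈ H1.A ∧ (e.1.1, e.2.1, e.2.2.1) ∈ H1.Edg) ∨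
                (e.2.1 ∉ H1.A ∧ e.1.1 = e.2.2.1)) ∧
               ((e.2.1 ∈ H2.A ∧ (e.1.2, e.2.1, e.2.2.2) ∈ H2.Edg) ∨
                (e.2.1 ∉ H2.A ∧ e.1.2 = e.2.2.2)) }
  Dyn := fun l => H1.Dyn l.1 ∪ H2.Dyn l.2
  Res := fun e =>
    { j | (e.2.1 ∈ H1.A ∧ j ∈ H1.Res (e.1.1, e.2.1, e.2.2.1)) ∨
          (e.2.1 ∉ H1.A ∧ ∃ x ∈ H1.X \ H2.X, j = eqJ x) } ∪
    { j | (e.2.1 ∈ H2.A ∧ j ∈ H2.Res (e.1.2, e.2.1, e.2.2.2)) ∨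
          (e.2.1 ∉ H2.A ∧ ∃ x ∈ H2.X \ H1.X, j = eqJ x) }
  Init := H1.Init ×ˢ H2.Init

/-- An infinite hybrid trace `τ₁ a₁ τ₂ a₂ …` over `A` and `X` is generated by `H`
if there is a sequence of locations starting in an initial location such that each
trajectory respects the dynamics of the current location, and each discrete step
follows an edge whose jump constraints are respected. -/
def Generated {V Act : Type*} (H : HA V Act) (α : ℕ → Traj V H.X × Act) : Prop :=
  ∃ ℓ : ℕ → H.Loc, ℓ 1 ∈ H.Init ∧ ∀ i, 1 ≤ i →
    (α i).2 ∈ H.A ∧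
    (∀ c ∈ H.Dyn (ℓ i), FlowSat (α i).1 c) ∧
    (ℓ i, (α i).2, ℓ (i + 1)) ∈ H.Edg ∧
    (∀ c ∈ H.Res (ℓ i, (α i).2, ℓ (i + 1)),
      JumpSat (α i).1.lstate (α (i + 1)).1.fstate c)

/-- Every hybrid trace generated by the composition `H₁ ∥ H₂` (with a common
action set `A₁ = A₂`, and with the constraints of `H₁` mentioning only variables
of `H₁`), when its trajectories are restricted pointwise to the variables of
`H₁`, is generated by `H₁`. -/
theorem stmt10 {V Act : Type*} (H1 H2 : HA V Act) (hA : H1.A = H2.A)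
    (hflow : ∀ ℓ : H1.Loc, ∀ c ∈ H1.Dyn ℓ, c.vars ⊆ H1.X)
    (hjump : ∀ e : H1.Loc × Act × H1.Loc, ∀ c ∈ H1.Res e, c.vars ⊆ H1.X)
    (α : ℕ → Traj V (comp H1 H2).X × Act)
    (hgen : Generated (comp H1 H2) α) :
    Generated H1 (fun i =>
      ((α i).1.restrict (Set.subset_union_left : H1.X ⊆ (comp H1 H2).X), (α i).2)) := by

  obtain ⟨ℓ, hinit, hstep⟩ := hgen
  refine ⟨fun i => (ℓ i).1, hinit.1, fun i hi => ?_⟩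
  obtain ⟨ha, hflw, hedg, hres⟩ := hstep i hi
  have haA : (α i).2 ∈ H1.A := by
    rcases ha with h | h
    · exact h
    · rw [hA]; exact h
  refine ⟨haA, ?_, ?_, ?_⟩
  · intro c hc
    have := hflw c (Or.inl hc)
    obtain ⟨h, hsat⟩ := this
    refine ⟨hflow _ c hc, ?_⟩
    have key : ∀ (h' : c.vars ⊆ H1.X),
        ((α i).1.restrict (Set.subset_union_left : H1.X ⊆ (comp H1 H2).X)).restrict h'
          = (α i).1.restrict h := by
      intro h'
      rfl
    rw [key]
    exact hsat
  · rcases hedg.1 with h | h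
    · exact h.2
    · exact absurd haA h.1
  · intro c hc
    have hres' : c ∈ (comp H1 H2).Res ((ℓ i), (α i).2, ℓ (i+1)) := by
      left; left
      rcases hedg.1 with h | h
      · exact ⟨haA, hc⟩
      · exact absurd haA h.1
    obtain ⟨h, hsat⟩ := hres c hres'
    refine ⟨hjump _ c hc, ?_⟩
    exact hsat
end

section
/- If an infinite hybrid trace α satisfies a HyLTL formula φ at position 1, then the sequence of sets Mᵢ = {ψ ∈ cl(φ) : α,i ⊨ ψ} consists of maximally consistent subsets of cl(φ), and for every i, (Mᵢ, aᵢ, M_{i+1}) satisfies the edge conditions of the tableau automaton H_φ: aᵢ ∈ M_{i+1}; Xψ ∈ Mᵢ iff ψ ∈ M_{i+1}; ψ₁ U ψ₂ ∈ Mᵢ iff ψ₂ ∈ Mᵢ or (ψ₁ ∈ Mᵢ and ψ₁ U ψ₂ ∈ M_{i+1}); ψ₁ R ψ₂ ∈ Mᵢ iff ψ₁, ψ₂ ∈ Mᵢ or (ψ₂ ∈ Mᵢ and ψ₁ R ψ₂ ∈ M_{i+1}). -/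
/-- HyLTL formulas over flow constraints `C` and actions `A`. -/
inductive Formula (C A : Type*) where
  | const : C → Formula C A
  | act : A → Formula C A
  | top : Formula C A
  | bot : Formula C A
  | neg : Formula C A → Formula C A
  | conj : Formula C A → Formula C A → Formula C A
  | disj : Formula C A → Formula C A → Formula C A
  | next : Formula C A → Formula C A
  | untl : Formula C A → Formula C A → Formula C A
  | rel : Formula C A → Formula C A → Formula C A

/-- Negation with double negations identified: `nneg (¬ψ) = ψ`. -/
def nneg {C A : Type*} : Formula C A → Formula C A
  | .neg ψ => ψ
  | ψ => .neg ψ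

/-- The closure `cl(φ)`: the smallest set containing `φ`, `⊤` and all actions,
closed under (double-negation-identified) negation and under immediate
subformulas of `∧`, `∨`, `X`, `U`, `R` formulas. -/
inductive InCl {C A : Type*} (φ : Formula C A) : Formula C A → Prop where
  | base : InCl φ φ
  | top : InCl φ Formula.top
  | act (b : A) : InCl φ (Formula.act b)
  | negc {ψ} : InCl φ ψ → InCl φ (nneg ψ)
  | conj_left {ψ₁ ψ₂} : InCl φ (Formula.conj ψ₁ ψ₂) → InCl φ ψ₁
  | conj_right {ψ₁ ψ₂} : InCl φ (Formula.conj ψ₁ ψ₂) → InCl φ ψ₂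
  | disj_left {ψ₁ ψ₂} : InCl φ (Formula.disj ψ₁ ψ₂) → InCl φ ψ₁
  | disj_right {ψ₁ ψ₂} : InCl φ (Formula.disj ψ₁ ψ₂) → InCl φ ψ₂
  | next_sub {ψ} : InCl φ (Formula.next ψ) → InCl φ ψ
  | untl_left {ψ₁ ψ₂} : InCl φ (Formula.untl ψ₁ ψ₂) → InCl φ ψ₁
  | untl_right {ψ₁ ψ₂} : InCl φ (Formula.untl ψ₁ ψ₂) → InCl φ ψ₂
  | rel_left {ψ₁ ψ₂} : InCl φ (Formula.rel ψ₁ ψ₂) → InCl φ ψ₁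
  | rel_right {ψ₁ ψ₂} : InCl φ (Formula.rel ψ₁ ψ₂) → InCl φ ψ₂

/-- HyLTL semantics over an infinite hybrid trace given by trajectories
`τ : ℕ → T` and actions `a : ℕ → A` (position `i ≥ 1` carries trajectory `τ i`,
and `a i` is the action between positions `i` and `i+1`); `csat` is the
satisfaction relation of flow constraints by trajectories. -/
def Sat {C A T : Type*} (csat : T → C → Prop) (τ : ℕ → T) (a : ℕ → A) :
    Formula C A → ℕ → Prop
  | .const c, i => csat (τ i) c
  | .act b, i => 1 < i ∧ a (i - 1) = b
  | .top, _ => True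
  | .bot, _ => False
  | .neg ψ, i => ¬ Sat csat τ a ψ i
  | .conj ψ χ, i => Sat csat τ a ψ i ∧ Sat csat τ a χ i
  | .disj ψ χ, i => Sat csat τ a ψ i ∨ Sat csat τ a χ i
  | .next ψ, i => Sat csat τ a ψ (i + 1)
  | .untl ψ χ, i => ∃ j, i ≤ j ∧ Sat csat τ a χ j ∧ ∀ k, i ≤ k → k < j → Sat csat τ a ψ k
  | .rel ψ χ, i => ∀ j, i ≤ j → (∀ k, i ≤ k → k < j → ¬ Sat csat τ a ψ k) → Sat csat τ a χ j

/-- A maximally consistent subset `M` of the closure `cl(φ)`. -/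
def MaxConsistent {C A : Type*} (φ : Formula C A) (M : Set (Formula C A)) : Prop :=
  (∀ ψ ∈ M, InCl φ ψ) ∧
  Formula.top ∈ M ∧
  (∀ ψ, InCl φ ψ → (ψ ∈ M ↔ nneg ψ ∉ M)) ∧
  (∀ ψ₁ ψ₂, InCl φ (Formula.conj ψ₁ ψ₂) →
    (Formula.conj ψ₁ ψ₂ ∈ M ↔ ψ₁ ∈ M ∧ ψ₂ ∈ M)) ∧
  (∀ ψ₁ ψ₂, InCl φ (Formula.disj ψ₁ ψ₂) →
    (Formula.disj ψ₁ ψ₂ ∈ M ↔ ψ₁ ∈ M ∨ ψ₂ ∈ M)) ∧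
  (∀ b b' : A, Formula.act b ∈ M → b' ≠ b → Formula.act b' ∉ M)

/-- `semM csat τ a φ i` is the set `Mᵢ = {ψ ∈ cl(φ) : α,i ⊨ ψ}` of closure
formulas true at position `i` of the trace. -/
def semM {C A T : Type*} (csat : T → C → Prop) (τ : ℕ → T) (a : ℕ → A)
    (φ : Formula C A) (i : ℕ) : Set (Formula C A) :=
  {ψ | InCl φ ψ ∧ Sat csat τ a ψ i}

lemma sat_nneg {C A T : Type*} (csat : T → C → Prop) (τ : ℕ → T) (a : ℕ → A)
    (ψ : Formula C A) (i : ℕ) :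
    Sat csat τ a (nneg ψ) i ↔ ¬ Sat csat τ a ψ i := by
  cases ψ <;> simp [nneg, Sat]

lemma sat_untl_iff {C A T : Type*} (csat : T → C → Prop) (τ : ℕ → T) (a : ℕ → A)
    (ψ₁ ψ₂ : Formula C A) (i : ℕ) :
    Sat csat τ a (.untl ψ₁ ψ₂) i ↔
      (Sat csat τ a ψ₂ i ∨
        (Sat csat τ a ψ₁ i ∧ Sat csat τ a (.untl ψ₁ ψ₂) (i + 1))) := by
  constructor
  · rintro ⟨j, hij, h2, h1⟩
    rcases eq_or_lt_of_le hij with rfl | hij'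
    · exact Or.inl h2
    · refine Or.inr ⟨h1 i le_rfl hij', j, hij', h2, fun k hk hkj => h1 k (by omega) hkj⟩
  · rintro (h2 | ⟨h1, j, hij, h2, h1'⟩)
    · exact ⟨i, le_rfl, h2, fun k hk hkj => absurd hkj (by omega)⟩
    · refine ⟨j, by omega, h2, fun k hk hkj => ?_⟩
      rcases eq_or_lt_of_le hk with rfl | hk'
      · exact h1
      · exact h1' k (by omega) hkj

lemma sat_rel_iff {C A T : Type*} (csat : T → C → Prop) (τ : ℕ → T) (a : ℕ → A)
    (ψ₁ ψ₂ : Formula C A) (i : ℕ) :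
    Sat csat τ a (.rel ψ₁ ψ₂) i ↔
      ((Sat csat τ a ψ₁ i ∧ Sat csat τ a ψ₂ i) ∨
        (Sat csat τ a ψ₂ i ∧ Sat csat τ a (.rel ψ₁ ψ₂) (i + 1))) := by
  constructor
  · intro h
    have h2 : Sat csat τ a ψ₂ i := h i le_rfl (fun k hk hkj => absurd hkj (by omega))
    by_cases h1 : Sat csat τ a ψ₁ i
    · exact Or.inl ⟨h1, h2⟩
    · refine Or.inr ⟨h2, fun j hij hno => h j (by omega) fun k hk hkj => ?_⟩
      rcases eq_or_lt_of_le hk with rfl | hk'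
      · exact h1
      · exact hno k (by omega) hkj
  · rintro (⟨h1, h2⟩ | ⟨h2, hr⟩) <;> intro j hij hno
    · rcases eq_or_lt_of_le hij with rfl | hij'
      · exact h2
      · exact absurd h1 (hno i le_rfl hij')
    · rcases eq_or_lt_of_le hij with rfl | hij'
      · exact h2
      · exact hr j (by omega) fun k hk hkj => hno k (by omega) hkj

/-- If the infinite hybrid trace `α` satisfies `φ` at position 1, then each
`Mᵢ = {ψ ∈ cl(φ) : α,i ⊨ ψ}` is maximally consistent, and consecutive sets
satisfy the edge conditions of the tableau automaton `H_φ`: `aᵢ ∈ M_{i+1}`;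
`Xψ ∈ Mᵢ` iff `ψ ∈ M_{i+1}`; the until and release expansion conditions. -/
theorem stmt16 {C A T : Type*} (csat : T → C → Prop) (τ : ℕ → T) (a : ℕ → A)
    (φ : Formula C A) (hφ : Sat csat τ a φ 1) :
    ∀ i, 1 ≤ i →
      MaxConsistent φ (semM csat τ a φ i) ∧
      Formula.act (a i) ∈ semM csat τ a φ (i + 1) ∧
      (∀ ψ, InCl φ (Formula.next ψ) →
        (Formula.next ψ ∈ semM csat τ a φ i ↔ ψ ∈ semM csat τ a φ (i + 1))) ∧
      (∀ ψ₁ ψ₂, InCl φ (Formula.untl ψ₁ ψ₂) →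
        (Formula.untl ψ₁ ψ₂ ∈ semM csat τ a φ i ↔
          (ψ₂ ∈ semM csat τ a φ i ∨
            (ψ₁ ∈ semM csat τ a φ i ∧ Formula.untl ψ₁ ψ₂ ∈ semM csat τ a φ (i + 1))))) ∧
      (∀ ψ₁ ψ₂, InCl φ (Formula.rel ψ₁ ψ₂) →
        (Formula.rel ψ₁ ψ₂ ∈ semM csat τ a φ i ↔
          ((ψ₁ ∈ semM csat τ a φ i ∧ ψ₂ ∈ semM csat τ a φ i) ∨
            (ψ₂ ∈ semM csat τ a φ i ∧ Formula.rel ψ₁ ψ₂ ∈ semM csat τ a φ (i + 1))))) := by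
  intro i hi
  refine ⟨⟨fun ψ hψ => hψ.1, ⟨InCl.top, trivial⟩, ?_, ?_, ?_, ?_⟩, ?_, ?_, ?_, ?_⟩
  · intro ψ hψ
    simp only [semM, Set.mem_setOf_eq, sat_nneg]
    constructor
    · rintro ⟨_, hs⟩ ⟨_, hns⟩; exact hns hs
    · intro h
      refine ⟨hψ, by_contra fun hns => h ⟨InCl.negc hψ, hns⟩⟩
  · intro ψ₁ ψ₂ hc
    simp only [semM, Set.mem_setOf_eq, Sat]
    exact ⟨fun ⟨_, h1, h2⟩ => ⟨⟨hc.conj_left, h1⟩, ⟨hc.conj_right, h2⟩⟩,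
      fun ⟨⟨_, h1⟩, ⟨_, h2⟩⟩ => ⟨hc, h1, h2⟩⟩
  · intro ψ₁ ψ₂ hc
    simp only [semM, Set.mem_setOf_eq, Sat]
    constructor
    · rintro ⟨_, h1 | h2⟩
      · exact Or.inl ⟨hc.disj_left, h1⟩
      · exact Or.inr ⟨hc.disj_right, h2⟩
    · rintro (⟨_, h1⟩ | ⟨_, h2⟩)
      · exact ⟨hc, Or.inl h1⟩
      · exact ⟨hc, Or.inr h2⟩
  · rintro b b' ⟨_, _, hb⟩ hne ⟨_, _, hb'⟩
    exact hne (hb'.symm ▸ hb)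
  · exact ⟨InCl.act _, by omega, by simp⟩
  · intro ψ hn
    simp only [semM, Set.mem_setOf_eq, Sat]
    exact ⟨fun ⟨_, h⟩ => ⟨hn.next_sub, h⟩, fun ⟨_, h⟩ => ⟨hn, h⟩⟩
  · intro ψ₁ ψ₂ hu
    simp only [semM, Set.mem_setOf_eq]
    rw [sat_untl_iff]
    constructor
    · rintro ⟨_, h2 | ⟨h1, hu'⟩⟩
      · exact Or.inl ⟨hu.untl_right, h2⟩
      · exact Or.inr ⟨⟨hu.untl_left, h1⟩, hu, hu'⟩
    · rintro (⟨_, h2⟩ | ⟨⟨_, h1⟩, _, hu'⟩)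
      · exact ⟨hu, Or.inl h2⟩
      · exact ⟨hu, Or.inr ⟨h1, hu'⟩⟩
  · intro ψ₁ ψ₂ hr
    simp only [semM, Set.mem_setOf_eq]
    rw [sat_rel_iff]
    constructor
    · rintro ⟨_, ⟨h1, h2⟩ | ⟨h2, hr'⟩⟩
      · exact Or.inl ⟨⟨hr.rel_left, h1⟩, ⟨hr.rel_right, h2⟩⟩
      · exact Or.inr ⟨⟨hr.rel_right, h2⟩, hr, hr'⟩
    · rintro (⟨⟨_, h1⟩, ⟨_, h2⟩⟩ | ⟨⟨_, h2⟩, _, hr'⟩)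
      · exact ⟨hr, Or.inl ⟨h1, h2⟩⟩
      · exact ⟨hr, Or.inr ⟨h2, hr'⟩⟩
end

section
/- If for an infinite trace α and until formula ψ₁ U ψ₂ ∈ cl(φ) the sets Mᵢ = {ψ ∈ cl(φ) : α,i ⊨ ψ} are considered, then either ψ₂ ∈ Mⱼ for infinitely many j, or ¬(ψ₁ U ψ₂) ∈ Mⱼ for all sufficiently large j; hence the sequence (Mᵢ) visits the accepting set F_{ψ₁ U ψ₂} = {M : ψ₂ ∈ M or ¬(ψ₁ U ψ₂) ∈ M} infinitely often. -/
/-- For an until formula `ψ₁ U ψ₂ ∈ cl(φ)` and the sets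
`Mᵢ = {ψ ∈ cl(φ) : α,i ⊨ ψ}`: either `ψ₂ ∈ Mⱼ` for infinitely many `j`, or
`¬(ψ₁ U ψ₂) ∈ Mⱼ` for all sufficiently large `j`; hence the sequence `(Mᵢ)`
visits the accepting set `{M : ψ₂ ∈ M or ¬(ψ₁ U ψ₂) ∈ M}` infinitely often. -/
theorem stmt17 {C A T : Type*} (csat : T → C → Prop) (τ : ℕ → T) (a : ℕ → A)
    (φ ψ₁ ψ₂ : Formula C A) (hcl : InCl φ (Formula.untl ψ₁ ψ₂)) :
    ((∀ N, ∃ j, N ≤ j ∧ ψ₂ ∈ semM csat τ a φ j) ∨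
      (∃ N, ∀ j, N ≤ j → nneg (Formula.untl ψ₁ ψ₂) ∈ semM csat τ a φ j)) ∧
    (∀ N, ∃ j, N ≤ j ∧
      semM csat τ a φ j ∈
        {M : Set (Formula C A) | ψ₂ ∈ M ∨ nneg (Formula.untl ψ₁ ψ₂) ∈ M}) := by

  have hcl2 : InCl φ ψ₂ := InCl.untl_right hcl
  have hcln : InCl φ (nneg (Formula.untl ψ₁ ψ₂)) := InCl.negc hcl
  have hnn : nneg (Formula.untl ψ₁ ψ₂) = Formula.neg (Formula.untl ψ₁ ψ₂) := rfl
  have key : (∀ N, ∃ j, N ≤ j ∧ ψ₂ ∈ semM csat τ a φ j) ∨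
      (∃ N, ∀ j, N ≤ j → nneg (Formula.untl ψ₁ ψ₂) ∈ semM csat τ a φ j) := by
    by_cases h : ∀ N, ∃ j, N ≤ j ∧ Sat csat τ a ψ₂ j
    · left
      intro N
      obtain ⟨j, hj, hs⟩ := h N
      exact ⟨j, hj, hcl2, hs⟩
    · right
      push_neg at h
      obtain ⟨N, hN⟩ := h
      refine ⟨N, fun j hj => ⟨hcln, ?_⟩⟩
      rw [hnn]
      intro ⟨k, hjk, hk, _⟩
      exact hN k (hj.trans hjk) hk
  refine ⟨key, ?_⟩
  intro N
  rcases key with h | ⟨M, hM⟩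
  · obtain ⟨j, hj, hm⟩ := h N
    exact ⟨j, hj, Or.inl hm⟩
  · exact ⟨max N M, le_max_left _ _, Or.inr (hM _ (le_max_right _ _))⟩
end
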